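/- For Re z > 0, the limit as n → ∞ of ∫_{−∞}^{log n} e^{τ z}(1 − e^{τ}/n)ⁿ dτ equals ∫_{−∞}^{∞} e^{τ z} e^{−e^{τ}} dτ, and the latter equals Γ(z). -/

import Mathlib

/-!
Substituting `t = e^τ` turns `e^{τz} dτ` into `t^{z-1} dt` and maps `(-∞, log n]` onto `(0, n]`.
The first integral thus becomes `∫₀ⁿ (1 - t/n)ⁿ t^{z-1} dt`, which tends to `Γ(z)` by dominated
convergence (`Complex.approx_Gamma_integral_tendsto_Gamma_integral`), and the second becomes
Euler's integral `∫₀^∞ e^{-t} t^{z-1} dt = Γ(z)`.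
-/

open Real MeasureTheory Filter Topology

lemma Complex.exp_ofReal_mul_eq_exp_mul_cpow (τ : ℝ) (z : ℂ) :
    Complex.exp ((τ : ℂ) * z) = (Real.exp τ : ℂ) * (Real.exp τ : ℂ) ^ (z - 1) := by
  rw [Complex.cpow_def_of_ne_zero (by exact_mod_cast (Real.exp_pos τ).ne'),
    ← Complex.ofReal_log (Real.exp_pos τ).le, Real.log_exp, Complex.ofReal_exp,
    ← Complex.exp_add]
  ring_nf

lemma setIntegral_image_exp {E : Type*} [NormedAddCommGroup E] [NormedSpace ℝ E]
    {s : Set ℝ} (hs : MeasurableSet s) (g : ℝ → E) :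
    ∫ t in Real.exp '' s, g t = ∫ τ in s, Real.exp τ • g (Real.exp τ) := by
  rw [integral_image_eq_integral_abs_deriv_smul hs
    (fun τ _ => (Real.hasDerivAt_exp τ).hasDerivWithinAt) Real.exp_injective.injOn g]
  simp only [abs_of_pos (Real.exp_pos _)]

lemma setIntegral_image_exp_mul_cpow {s : Set ℝ} (hs : MeasurableSet s) (f : ℝ → ℝ) (z : ℂ) :
    ∫ t in Real.exp '' s, (f t : ℂ) * (t : ℂ) ^ (z - 1) =
      ∫ τ in s, Complex.exp ((τ : ℂ) * z) * f (Real.exp τ) := by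
  rw [setIntegral_image_exp hs]
  refine setIntegral_congr_fun hs fun τ _ => ?_
  rw [Complex.exp_ofReal_mul_eq_exp_mul_cpow, Complex.real_smul]
  ring

lemma integral_exp_mul_exp_neg_exp_eq_Gamma {z : ℂ} (hz : 0 < z.re) :
    ∫ τ : ℝ, Complex.exp ((τ : ℂ) * z) * ((Real.exp (-Real.exp τ) : ℝ) : ℂ) =
      Complex.Gamma z := by
  rw [Complex.Gamma_eq_integral hz, Complex.GammaIntegral, ← Real.range_exp, ← Set.image_univ,
    setIntegral_image_exp_mul_cpow MeasurableSet.univ (fun t => Real.exp (-t)), setIntegral_univ]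

lemma integral_Iic_log_exp_mul_one_sub_exp_div_pow {n : ℕ} (hn : n ≠ 0) (z : ℂ) :
    ∫ τ in Set.Iic (Real.log n), Complex.exp ((τ : ℂ) * z) * ((1 - Real.exp τ / n : ℝ) : ℂ) ^ n =
      ∫ t in (0 : ℝ)..n, ((1 - t / n) ^ n : ℝ) * (t : ℂ) ^ (z - 1) := by
  have hn' : (0 : ℝ) < n := by positivity
  rw [intervalIntegral.integral_of_le hn'.le, ← Real.exp_log hn', ← Real.image_exp_Iic,
    Real.exp_log hn', setIntegral_image_exp_mul_cpow measurableSet_Iic (fun t => (1 - t / n) ^ n)]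
  push_cast
  rfl

/-- For `Re z > 0`, the limit as `n → ∞` of `∫_{-∞}^{log n} e^{τz}(1 - e^τ/n)ⁿ dτ`
equals `∫_{-∞}^{∞} e^{τz} e^{-e^τ} dτ`, and the latter equals `Γ(z)`. -/
theorem gamma_limit_formula (z : ℂ) (hz : 0 < z.re) :
    Tendsto
      (fun n : ℕ =>
        ∫ τ in Set.Iic (Real.log n),
          Complex.exp ((τ : ℂ) * z) * ((1 - Real.exp τ / n : ℝ) : ℂ) ^ n)
      atTop
      (𝓝 (∫ τ : ℝ, Complex.exp ((τ : ℂ) * z) * ((Real.exp (-Real.exp τ) : ℝ) : ℂ))) ∧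
    (∫ τ : ℝ, Complex.exp ((τ : ℂ) * z) * ((Real.exp (-Real.exp τ) : ℝ) : ℂ))
      = Complex.Gamma z := by
  rw [integral_exp_mul_exp_neg_exp_eq_Gamma hz]
  refine ⟨(Complex.approx_Gamma_integral_tendsto_Gamma_integral hz).congr' ?_, rfl⟩
  filter_upwards [eventually_ne_atTop 0] with n hn
  exact (integral_Iic_log_exp_mul_one_sub_exp_div_pow hn z).symm
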